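/- For the delay semigroup on H = ℝⁿ × L²([−d,0];ℝⁿ) with P(x₀,x₁) = (x₀,0), one has P e^{tA₁}(x₀,x₁) = (e^{ta₀}x₀ + ∫_{−d}^0 1_{[−t,0]}(s) e^{(t+s)a₀} x₁(s) ds, 0); moreover the family of semigroup operators in the given explicit form satisfies the semigroup property e^{(t+s)A₁} = e^{tA₁} e^{sA₁} for t, s ≥ 0 with t + s ≤ d. -/

import Mathlib

/-!
For `0 ≤ t ≤ d` the indicator window `[-t, 0]` sits inside `[-d, 0]`, so the first component of
`delaySG d a₀ t x` is `e^{ta₀} x₀ + ∫_{-t}^0 e^{(t+r)a₀} x₁(r) dr`. After composing, `e^{ta₀}`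
carries the `s`-integral over `[-s, 0]` to the `(t+s)`-integral over the same window, because
`e^{ta₀} e^{(s+r)a₀} = e^{(t+s+r)a₀}`. The new `t`-integral only sees the shifted history
`x₁(· - s)`, and the substitution `r ↦ r - s` turns it into the `(t+s)`-integral over
`[-(t+s), -s]`. The two windows tile `[-(t+s), 0]`. The second component is a truncated shift, and
such shifts compose.
-/

open MeasureTheory Set

/-- The delay semigroup on `ℝⁿ × L²([−d,0];ℝⁿ)` in its explicit form:
`e^{tA₁}(x₀,x₁) = (e^{ta₀}x₀ + ∫_{−d}^0 1_{[−t,0]}(s) e^{(t+s)a₀} x₁(s) ds,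
x₁(·−t) 1_{[−d+t,0]}(·))`. -/
noncomputable def delaySG {n : ℕ} (d : ℝ)
    (a₀ : EuclideanSpace ℝ (Fin n) →L[ℝ] EuclideanSpace ℝ (Fin n)) (t : ℝ)
    (x : EuclideanSpace ℝ (Fin n) × (ℝ → EuclideanSpace ℝ (Fin n))) :
    EuclideanSpace ℝ (Fin n) × (ℝ → EuclideanSpace ℝ (Fin n)) :=
  ((NormedSpace.exp (t • a₀)) x.1 +
      ∫ s in Set.Ioc (-d) (0 : ℝ),
        Set.indicator (Set.Icc (-t) 0)
          (fun s => (NormedSpace.exp ((t + s) • a₀)) (x.2 s)) s,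
    fun ξ => Set.indicator (Set.Icc (-d + t) 0) (fun ξ => x.2 (ξ - t)) ξ)

/-- The projection `P(x₀,x₁) = (x₀,0)` on `ℝⁿ × L²([−d,0];ℝⁿ)`. -/
def delayP {n : ℕ}
    (x : EuclideanSpace ℝ (Fin n) × (ℝ → EuclideanSpace ℝ (Fin n))) :
    EuclideanSpace ℝ (Fin n) × (ℝ → EuclideanSpace ℝ (Fin n)) :=
  (x.1, 0)

theorem NormedSpace.exp_add_smul {E : Type*} [NormedAddCommGroup E] [NormedSpace ℝ E]
    [CompleteSpace E] (a : E →L[ℝ] E) (u v : ℝ) :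
    NormedSpace.exp ((u + v) • a) = NormedSpace.exp (u • a) * NormedSpace.exp (v • a) := by
  -- the general facts about `NormedSpace.exp` are stated for normed `ℚ`-algebras
  let : NormedAlgebra ℚ (E →L[ℝ] E) := .restrictScalars ℚ ℝ _
  rw [add_smul]
  exact NormedSpace.exp_add_of_commute (((Commute.refl a).smul_left u).smul_right v)

theorem MeasureTheory.IntegrableOn.continuousOn_apply_of_subset {X 𝕜 E F : Type*}
    [TopologicalSpace X] [MeasurableSpace X] [OpensMeasurableSpace X] {μ : Measure X}
    [NontriviallyNormedField 𝕜] [NormedAddCommGroup E] [NormedSpace 𝕜 E]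
    [NormedAddCommGroup F] [NormedSpace 𝕜 F] [SecondCountableTopologyEither X (E →L[𝕜] F)]
    {L : X → E →L[𝕜] F} {g : X → E} {A K : Set X} (hL : ContinuousOn L K)
    (hg : IntegrableOn g A μ) (hK : IsCompact K) (hA : MeasurableSet A) (hAK : A ⊆ K) :
    IntegrableOn (fun x => L x (g x)) A μ := by
  obtain ⟨C, hC⟩ := hK.exists_bound_of_continuousOn hL
  have hmeas : AEStronglyMeasurable (fun x => L x (g x)) (μ.restrict A) :=
    isBoundedBilinearMap_apply.continuous.comp_aestronglyMeasurable
      (((hL.mono hAK).aestronglyMeasurable hA).prodMk hg.aestronglyMeasurable)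
  refine Integrable.mono' (hg.norm.const_mul C) hmeas ?_
  filter_upwards [ae_restrict_mem hA] with x hx
  calc ‖L x (g x)‖ ≤ ‖L x‖ * ‖g x‖ := (L x).le_opNorm (g x)
    _ ≤ C * ‖g x‖ := by gcongr; exact hC x (hAK hx)

theorem setIntegral_Ioc_indicator_Icc {E : Type*} [NormedAddCommGroup E] [NormedSpace ℝ E]
    (f : ℝ → E) {a b c : ℝ} (hab : a ≤ b) (hbc : b ≤ c) :
    ∫ x in Ioc a c, (Icc b c).indicator f x = ∫ x in b..c, f x := by
  rw [setIntegral_indicator measurableSet_Icc, intervalIntegral.integral_of_le hbc]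
  refine setIntegral_congr_set (Filter.EventuallyLE.antisymm ?_ ?_)
  · exact (LE.le.eventuallyLE (inter_subset_right)).trans Ioc_ae_eq_Icc.symm.le
  · exact LE.le.eventuallyLE fun x hx => ⟨⟨hab.trans_lt hx.1, hx.2⟩, Ioc_subset_Icc_self hx⟩

theorem intervalIntegrable_exp_smul_apply {E : Type*} [NormedAddCommGroup E] [NormedSpace ℝ E]
    [CompleteSpace E] (a : E →L[ℝ] E) (c : ℝ) {g : ℝ → E} {a' b' α β : ℝ}
    (hg : IntegrableOn g (Ioc a' b')) (hα : a' ≤ α) (hαβ : α ≤ β) (hβ : β ≤ b') :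
    IntervalIntegrable (fun r => NormedSpace.exp ((c + r) • a) (g r)) volume α β := by
  let : NormedAlgebra ℚ (E →L[ℝ] E) := .restrictScalars ℚ ℝ _
  refine (intervalIntegrable_iff_integrableOn_Ioc_of_le hαβ).2 ?_
  exact IntegrableOn.continuousOn_apply_of_subset (by fun_prop)
    (hg.mono_set (Ioc_subset_Ioc hα hβ)) isCompact_Icc measurableSet_Ioc Ioc_subset_Icc_self

section DelaySemigroup

variable {n : ℕ} {d : ℝ} (a₀ : EuclideanSpace ℝ (Fin n) →L[ℝ] EuclideanSpace ℝ (Fin n))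

local notation "E" => EuclideanSpace ℝ (Fin n)

theorem delaySG_fst_of_le {t : ℝ} (ht : 0 ≤ t) (htd : t ≤ d) (x : E × (ℝ → E)) :
    (delaySG d a₀ t x).1 =
      NormedSpace.exp (t • a₀) x.1 + ∫ r in -t..0, NormedSpace.exp ((t + r) • a₀) (x.2 r) := by
  rw [delaySG, setIntegral_Ioc_indicator_Icc _ (by linarith) (by linarith)]

theorem delaySG_snd_add {t s : ℝ} (ht : 0 ≤ t) (hs : 0 ≤ s) (x : E × (ℝ → E)) :
    (delaySG d a₀ (t + s) x).2 = (delaySG d a₀ t (delaySG d a₀ s x)).2 := by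
  funext ξ
  simp only [delaySG, indicator_apply, mem_Icc, sub_sub]
  split_ifs <;> grind

theorem delaySG_fst_add {t s : ℝ} (ht : 0 ≤ t) (hs : 0 ≤ s) (hts : t + s ≤ d) {x : E × (ℝ → E)}
    (hx : Integrable x.2 (volume.restrict (Ioc (-d) 0))) :
    (delaySG d a₀ (t + s) x).1 = (delaySG d a₀ t (delaySG d a₀ s x)).1 := by
  set F : ℝ → E := fun r => NormedSpace.exp ((t + s + r) • a₀) (x.2 r)
  have hflow : NormedSpace.exp (t • a₀) (∫ r in -s..0, NormedSpace.exp ((s + r) • a₀) (x.2 r)) =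
      ∫ r in -s..0, F r := by
    rw [← ContinuousLinearMap.intervalIntegral_comp_comm _
      (intervalIntegrable_exp_smul_apply a₀ s hx (by linarith) (by linarith) le_rfl)]
    refine intervalIntegral.integral_congr fun r _ => ?_
    change _ = NormedSpace.exp ((t + s + r) • a₀) (x.2 r)
    rw [add_assoc, NormedSpace.exp_add_smul a₀ t]
    rfl
  have hshift : ∫ r in -t..0, NormedSpace.exp ((t + r) • a₀) ((delaySG d a₀ s x).2 r) =
      ∫ r in -(t + s)..-s, F r := by
    rw [neg_add', ← zero_sub s, ← intervalIntegral.integral_comp_sub_right]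
    refine intervalIntegral.integral_congr fun r hr => ?_
    rw [uIcc_of_le (by linarith)] at hr
    have hr' : r ∈ Icc (-d + s) 0 := ⟨by linarith [hr.1], hr.2⟩
    simp only [delaySG, indicator_of_mem hr', F, add_add_sub_cancel]
  have hF : ∀ α β, -d ≤ α → α ≤ β → β ≤ 0 → IntervalIntegrable F volume α β :=
    fun _ _ hα hαβ hβ => intervalIntegrable_exp_smul_apply a₀ (t + s) hx hα hαβ hβ
  rw [delaySG_fst_of_le a₀ (by linarith) hts, delaySG_fst_of_le a₀ ht (by linarith),
    delaySG_fst_of_le a₀ hs (by linarith), hshift, map_add, hflow, NormedSpace.exp_add_smul,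
    mul_apply_eq_comp, add_assoc, add_comm (∫ r in -s..0, F r),
    intervalIntegral.integral_add_adjacent_intervals
      (hF _ _ (by linarith) (by linarith) (by linarith))
      (hF _ _ (by linarith) (by linarith) le_rfl)]

end DelaySemigroup

theorem stmt16_general (n : ℕ) (d : ℝ)
    (a₀ : EuclideanSpace ℝ (Fin n) →L[ℝ] EuclideanSpace ℝ (Fin n)) :
    (∀ t : ℝ, ∀ x : EuclideanSpace ℝ (Fin n) × (ℝ → EuclideanSpace ℝ (Fin n)),
      delayP (delaySG d a₀ t x) =
        ((NormedSpace.exp (t • a₀)) x.1 +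
          ∫ s in Set.Ioc (-d) (0 : ℝ),
            Set.indicator (Set.Icc (-t) 0)
              (fun s => (NormedSpace.exp ((t + s) • a₀)) (x.2 s)) s, 0)) ∧
    (∀ t s : ℝ, 0 ≤ t → 0 ≤ s → t + s ≤ d →
      ∀ x : EuclideanSpace ℝ (Fin n) × (ℝ → EuclideanSpace ℝ (Fin n)),
        MeasureTheory.Integrable x.2 ((volume : Measure ℝ).restrict (Set.Ioc (-d) 0)) →
        delaySG d a₀ (t + s) x = delaySG d a₀ t (delaySG d a₀ s x)) :=
  ⟨fun _ _ => rfl, fun _ _ ht hs hts x hx =>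
    Prod.ext (delaySG_fst_add a₀ ht hs hts hx) (delaySG_snd_add a₀ ht hs x)⟩

/-- `P e^{tA₁}(x₀,x₁) = (e^{ta₀}x₀ + ∫_{−d}^0 1_{[−t,0]}(s) e^{(t+s)a₀}x₁(s) ds, 0)`,
and the explicit family satisfies the semigroup property `e^{(t+s)A₁} = e^{tA₁} e^{sA₁}`
for `t, s ≥ 0` with `t + s ≤ d`. -/
theorem stmt16 (n : ℕ) (d : ℝ) (hd : 0 < d)
    (a₀ : EuclideanSpace ℝ (Fin n) →L[ℝ] EuclideanSpace ℝ (Fin n)) :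
    (∀ t : ℝ, ∀ x : EuclideanSpace ℝ (Fin n) × (ℝ → EuclideanSpace ℝ (Fin n)),
      delayP (delaySG d a₀ t x) =
        ((NormedSpace.exp (t • a₀)) x.1 +
          ∫ s in Set.Ioc (-d) (0 : ℝ),
            Set.indicator (Set.Icc (-t) 0)
              (fun s => (NormedSpace.exp ((t + s) • a₀)) (x.2 s)) s, 0)) ∧
    (∀ t s : ℝ, 0 ≤ t → 0 ≤ s → t + s ≤ d →
      ∀ x : EuclideanSpace ℝ (Fin n) × (ℝ → EuclideanSpace ℝ (Fin n)),
        MeasureTheory.Integrable x.2 ((volume : Measure ℝ).restrict (Set.Ioc (-d) 0)) →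
        delaySG d a₀ (t + s) x = delaySG d a₀ t (delaySG d a₀ s x)) :=
  stmt16_general n d a₀
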